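/- Let ζ be a non-bounding 1-cycle of K and let η and η' be connected 1-cocycles of K that are cohomologous (their symmetric difference is a coboundary). Then η is a feasible set for ζ if and only if η' is a feasible set for ζ. -/

import Mathlib

namespace ArxivCut

noncomputable section

attribute [local instance] Classical.propDecidable

open Finset

variable {V : Type*} [Fintype V] [DecidableEq V]

/-- A finite abstract simplicial complex on the vertex type `V`. -/
structure SComplex (V : Type*) [DecidableEq V] where
  faces : Finset (Finset V)
  nonempty_mem : ∀ s ∈ faces, s.Nonempty
  down_closed : ∀ s ∈ faces, ∀ t ⊆ s, t.Nonempty → t ∈ faces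

/-- The boundary of a `𝔽₂`-chain (a chain is identified with its set of simplices):
a simplex `τ` lies in the boundary iff it is a facet of an odd number of members. -/
def bdry (c : Finset (Finset V)) : Finset (Finset V) :=
  Finset.univ.filter fun τ => Odd ((c.filter fun σ => τ ⊆ σ ∧ τ.card + 1 = σ.card)).card

/-- `c` is an `r`-chain of `K` (a set of `r`-simplices of `K`). -/
def IsRChain (K : SComplex V) (r : ℕ) (c : Finset (Finset V)) : Prop :=
  ∀ σ ∈ c, σ ∈ K.faces ∧ σ.card = r + 1

/-- `c` is an `r`-cycle of `K`. -/
def IsRCycle (K : SComplex V) (r : ℕ) (c : Finset (Finset V)) : Prop :=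
  IsRChain K r c ∧ bdry c = ∅

/-- `z` is a bounding `r`-cycle of `K`: it is the boundary of an `(r+1)`-chain of `K`. -/
def IsBounding (K : SComplex V) (r : ℕ) (z : Finset (Finset V)) : Prop :=
  ∃ b, IsRChain K (r + 1) b ∧ bdry b = z

/-- Two `r`-chains are homologous in `K` if their `𝔽₂`-sum (symmetric difference) bounds. -/
def Homologous (K : SComplex V) (r : ℕ) (a b : Finset (Finset V)) : Prop :=
  IsBounding K r (symmDiff a b)


/-- `e` is an edge (1-simplex) of `K`. -/
def IsEdge (K : SComplex V) (e : Finset V) : Prop := e ∈ K.faces ∧ e.card = 2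

/-- `t` is a triangle (2-simplex) of `K`. -/
def IsTri (K : SComplex V) (t : Finset V) : Prop := t ∈ K.faces ∧ t.card = 3

/-- The 1-skeleton of `K`, as a simple graph on the vertex type. -/
def skeleton (K : SComplex V) : SimpleGraph V where
  Adj u w := u ≠ w ∧ ({u, w} : Finset V) ∈ K.faces
  symm := by
    constructor
    intro u w h
    refine ⟨h.1.symm, ?_⟩
    rw [Finset.pair_comm]
    exact h.2
  loopless := by constructor; intro v h; exact h.1 rfl

/-- `K` is a triangulation of a closed surface: a finite connected 2-dimensional
simplicial complex in which every edge is contained in exactly two triangles and the link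
of every vertex is a single cycle (equivalently, the triangles around each vertex are
connected through edges containing that vertex). -/
structure IsClosedSurface (K : SComplex V) : Prop where
  vert_mem : ∀ v : V, ({v} : Finset V) ∈ K.faces
  dim_le : ∀ s ∈ K.faces, s.card ≤ 3
  pure2 : ∀ s ∈ K.faces, ∃ t, IsTri K t ∧ s ⊆ t
  edge_in_two_tri : ∀ e, IsEdge K e →
    (Finset.univ.filter fun t => IsTri K t ∧ e ⊆ t).card = 2
  conn : (skeleton K).Connected
  link_single_cycle : ∀ v : V, ∀ t₁ t₂, IsTri K t₁ → IsTri K t₂ → v ∈ t₁ → v ∈ t₂ →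
    Relation.ReflTransGen
      (fun a b => IsTri K a ∧ IsTri K b ∧ v ∈ a ∧ v ∈ b ∧ (a ∩ b).card = 2) t₁ t₂

/-- `c` is a 1-cycle of `K`: a set of edges of `K` meeting every vertex in an even number
of edges. -/
def IsOneCycle (K : SComplex V) (c : Finset (Finset V)) : Prop :=
  (∀ e ∈ c, IsEdge K e) ∧ ∀ v : V, Even ((c.filter fun e => v ∈ e).card)

/-- `z` is a sum of boundaries of triangles of `K`. -/
def IsBounding1 (K : SComplex V) (z : Finset (Finset V)) : Prop :=
  ∃ T : Finset (Finset V), (∀ t ∈ T, IsTri K t) ∧ bdry T = z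

/-- Two 1-chains are homologous: their sum (symmetric difference) is a sum of triangle
boundaries. -/
def Homol1 (K : SComplex V) (a b : Finset (Finset V)) : Prop :=
  IsBounding1 K (symmDiff a b)

/-- `η` is a 1-cocycle of `K`: a set of edges of `K` such that every triangle of `K`
contains an even number of edges of `η`. -/
def IsCocycle (K : SComplex V) (η : Finset (Finset V)) : Prop :=
  (∀ e ∈ η, IsEdge K e) ∧ ∀ t, IsTri K t → Even ((η.filter fun e => e ⊆ t).card)

/-- The dual edges corresponding to the edge set `F` : two distinct triangles of `K` are
related if they share an edge belonging to `F`. -/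
def DualStep (K : SComplex V) (F : Finset (Finset V)) (t₁ t₂ : Finset V) : Prop :=
  t₁ ≠ t₂ ∧ IsTri K t₁ ∧ IsTri K t₂ ∧ ∃ e ∈ F, e ⊆ t₁ ∧ e ⊆ t₂

/-- A triangle incident to the edge set `F` (a node of the subgraph of the dual graph
induced by the dual edges corresponding to `F`). -/
def Incident (K : SComplex V) (F : Finset (Finset V)) (t : Finset V) : Prop :=
  IsTri K t ∧ ∃ e ∈ F, e ⊆ t

/-- The subgraph of the dual graph `D_K` induced by the dual edges corresponding to the
edge set `F` is connected. -/
def DualConnected (K : SComplex V) (F : Finset (Finset V)) : Prop :=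
  ∀ t₁ t₂, Incident K F t₁ → Incident K F t₂ →
    Relation.ReflTransGen (DualStep K F) t₁ t₂

/-- `S` is a feasible set for the 1-cycle `ζ`: it intersects every cycle homologous
to `ζ`. -/
def Feasible (K : SComplex V) (ζ S : Finset (Finset V)) : Prop :=
  ∀ γ, IsOneCycle K γ → Homol1 K γ ζ → (γ ∩ S).Nonempty

/-- The coboundary `δ(A)` of a set `A` of vertices: the set of edges of `K` with exactly
one endpoint in `A`. -/
def cobdryV (K : SComplex V) (A : Finset V) : Finset (Finset V) :=
  Finset.univ.filter fun e => IsEdge K e ∧ (e ∩ A).card = 1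

/-- Two cocycles are cohomologous: their sum (symmetric difference) is a coboundary. -/
def Cohomologous (K : SComplex V) (η η' : Finset (Finset V)) : Prop :=
  ∃ A : Finset V, symmDiff η η' = cobdryV K A

/-! If a cycle `γ` homologous to `ζ` misses `η'`, then `γ ∩ η = γ ∩ δ(A)`, which has even size
because a cycle meets every coboundary evenly. A triangle meets a cocycle `η` in zero or two
edges, so the triangles along a dual path in `η` from an `η`-edge `e` to an `η`-edge `e'` form a
chain whose boundary meets `η` exactly in `{e, e'}`; as `η` is connected, every even subset of
`η` is the trace on `η` of a triangle boundary. Adding to `γ` the boundary whose trace is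
`γ ∩ η` gives a cycle homologous to `ζ` that misses `η`. -/

open scoped symmDiff

lemma even_card_symmDiff_iff {α : Type*} [DecidableEq α] {A B : Finset α} :
    Even #(A ∆ B) ↔ (Even #A ↔ Even #B) := by
  have hsum := card_union_add_card_inter A B
  rw [symmDiff_eq_sup_sdiff_inf, sup_eq_union, inf_eq_inter,
    card_sdiff_of_subset inter_subset_union, Nat.even_sub (card_le_card inter_subset_union),
    ← Nat.even_add, hsum, Nat.even_add]

lemma inter_symmDiff_distrib_left {α : Type*} [DecidableEq α] (s t u : Finset α) :
    s ∩ t ∆ u = (s ∩ t) ∆ (s ∩ u) :=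
  inf_symmDiff_distrib_left s t u

lemma inter_symmDiff_distrib_right {α : Type*} [DecidableEq α] (s t u : Finset α) :
    s ∆ t ∩ u = (s ∩ u) ∆ (t ∩ u) :=
  inf_symmDiff_distrib_right s t u

lemma singleton_symmDiff_singleton {α : Type*} [DecidableEq α] {a b : α} (hab : a ≠ b) :
    ({a} : Finset α) ∆ {b} = {a, b} := by
  ext x
  simp only [mem_symmDiff, mem_singleton, mem_insert]
  constructor
  · rintro (⟨rfl, -⟩ | ⟨rfl, -⟩) <;> simp
  · rintro (rfl | rfl)
    exacts [Or.inl ⟨rfl, hab⟩, Or.inr ⟨rfl, hab.symm⟩]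

lemma filter_symmDiff {α : Type*} [DecidableEq α] (p : α → Prop) [DecidablePred p]
    (A B : Finset α) : (A ∆ B).filter p = A.filter p ∆ B.filter p := by
  ext x
  simp only [mem_filter, mem_symmDiff]
  tauto

lemma even_card_filter_odd_card_of_forall_even {α β : Type*} (r : α → β → Prop)
    [∀ a b, Decidable (r a b)] {s : Finset α} {t : Finset β}
    (h : ∀ b ∈ t, Even #{a ∈ s | r a b}) : Even #{a ∈ s | Odd #{b ∈ t | r a b}} := by
  rw [← even_sum_iff_even_card_odd]
  have := sum_card_bipartiteAbove_eq_sum_card_bipartiteBelow r (s := s) (t := t)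
  simp only [bipartiteAbove, bipartiteBelow] at this
  rw [this]
  exact even_sum _ h

section Chains

variable {K : SComplex V}

lemma mem_bdry {c : Finset (Finset V)} {τ : Finset V} :
    τ ∈ bdry c ↔ Odd #{σ ∈ c | τ ⊆ σ ∧ #τ + 1 = #σ} := by
  simp [bdry]

lemma mem_bdry_singleton {t τ : Finset V} : τ ∈ bdry {t} ↔ τ ⊆ t ∧ #τ + 1 = #t := by
  rw [mem_bdry, filter_singleton]
  split_ifs with h <;> simp [h]

@[simp]
lemma bdry_empty : bdry (∅ : Finset (Finset V)) = ∅ := by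
  simp [bdry]

lemma bdry_symmDiff (c d : Finset (Finset V)) : bdry (c ∆ d) = bdry c ∆ bdry d := by
  ext τ
  simp only [mem_symmDiff, mem_bdry, filter_symmDiff, ← Nat.not_even_iff_odd,
    even_card_symmDiff_iff]
  tauto

omit [Fintype V] in
lemma forall_isTri_symmDiff {T T' : Finset (Finset V)} (hT : ∀ t ∈ T, IsTri K t)
    (hT' : ∀ t ∈ T', IsTri K t) : ∀ t ∈ T ∆ T', IsTri K t := by
  intro t ht
  rcases mem_symmDiff.1 ht with ⟨ht, -⟩ | ⟨ht, -⟩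
  exacts [hT t ht, hT' t ht]

lemma IsBounding1.symmDiff {x y : Finset (Finset V)} (hx : IsBounding1 K x)
    (hy : IsBounding1 K y) : IsBounding1 K (x ∆ y) := by
  obtain ⟨T, hT, rfl⟩ := hx
  obtain ⟨T', hT', rfl⟩ := hy
  exact ⟨T ∆ T', forall_isTri_symmDiff hT hT', bdry_symmDiff T T'⟩

lemma isEdge_of_mem_bdry {T : Finset (Finset V)} (hT : ∀ t ∈ T, IsTri K t) {e : Finset V}
    (he : e ∈ bdry T) : IsEdge K e := by
  obtain ⟨σ, hσ⟩ := card_pos.1 (mem_bdry.1 he).pos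
  obtain ⟨hσT, heσ, hcard⟩ := mem_filter.1 hσ
  obtain ⟨hσK, hσ3⟩ := hT σ hσT
  have he2 : #e = 2 := by omega
  exact ⟨K.down_closed σ hσK e heσ (card_pos.1 (by omega)), he2⟩

lemma card_edges_of_triangle_containing {σ : Finset V} (hσ : #σ = 3) {v : V} (hv : v ∈ σ) :
    #{τ : Finset V | v ∈ τ ∧ τ ⊆ σ ∧ #τ + 1 = #σ} = 2 := by
  have himage : ({τ : Finset V | v ∈ τ ∧ τ ⊆ σ ∧ #τ + 1 = #σ} : Finset (Finset V))
      = (σ.erase v).image fun w => {v, w} := by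
    ext τ
    simp only [mem_filter, mem_univ, true_and, mem_image, mem_erase, hσ]
    constructor
    · rintro ⟨hvτ, hτσ, hτ⟩
      obtain ⟨x, y, hxy, rfl⟩ := card_eq_two.1 (by omega : #τ = 2)
      rcases mem_insert.1 hvτ with rfl | hvy
      · exact ⟨y, ⟨hxy.symm, hτσ (by simp)⟩, rfl⟩
      · rw [mem_singleton.1 hvy]
        exact ⟨x, ⟨hxy, hτσ (by simp)⟩, pair_comm _ _⟩
    · rintro ⟨w, ⟨hwv, hwσ⟩, rfl⟩
      exact ⟨by simp, insert_subset hv (singleton_subset_iff.2 hwσ), by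
        rw [card_pair hwv.symm]⟩
  have hinj : Set.InjOn (fun w => ({v, w} : Finset V)) (σ.erase v) := by
    intro w hw w' _ hww'
    have hw' : w ∈ ({v, w'} : Finset V) := by
      rw [← show ({v, w} : Finset V) = {v, w'} from hww']
      simp
    simpa [(mem_erase.1 hw).1] using hw'
  rw [himage, card_image_of_injOn hinj, card_erase_of_mem hv, hσ]

lemma even_card_edges_of_triangle_containing {σ : Finset V} (hσ : #σ = 3) (v : V) :
    Even #{τ : Finset V | v ∈ τ ∧ τ ⊆ σ ∧ #τ + 1 = #σ} := by
  by_cases hv : v ∈ σ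
  · rw [card_edges_of_triangle_containing hσ hv]
    exact even_two
  · rw [card_eq_zero.2 (filter_eq_empty_iff.2 fun τ _ ⟨hvτ, hτσ, _⟩ => hv (hτσ hvτ))]
    exact Even.zero

lemma isOneCycle_bdry {T : Finset (Finset V)} (hT : ∀ t ∈ T, IsTri K t) :
    IsOneCycle K (bdry T) := by
  refine ⟨fun e he => isEdge_of_mem_bdry hT he, fun v => ?_⟩
  have hfilter : (bdry T).filter (v ∈ ·)
      = ({τ | Odd #{σ ∈ T | v ∈ τ ∧ τ ⊆ σ ∧ #τ + 1 = #σ}} : Finset (Finset V)) := by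
    ext τ
    by_cases hvτ : v ∈ τ <;> simp [bdry, hvτ]
  rw [hfilter]
  exact even_card_filter_odd_card_of_forall_even _ fun σ hσ =>
    even_card_edges_of_triangle_containing (hT σ hσ).2 v

omit [Fintype V] in
lemma IsOneCycle.symmDiff {a b : Finset (Finset V)} (ha : IsOneCycle K a)
    (hb : IsOneCycle K b) : IsOneCycle K (a ∆ b) := by
  refine ⟨fun e he => ?_, fun v => ?_⟩
  · rcases mem_symmDiff.1 he with ⟨he, -⟩ | ⟨he, -⟩
    exacts [ha.1 e he, hb.1 e he]
  · rw [filter_symmDiff, even_card_symmDiff_iff]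
    exact iff_of_true (ha.2 v) (hb.2 v)

lemma IsOneCycle.even_card_inter_cobdryV {γ : Finset (Finset V)} (hγ : IsOneCycle K γ)
    (A : Finset V) : Even #(γ ∩ cobdryV K A) := by
  have hinter : γ ∩ cobdryV K A = {e ∈ γ | Odd #{v ∈ A | v ∈ e}} := by
    ext e
    simp only [cobdryV, mem_inter, mem_filter, mem_univ, true_and, filter_mem_eq_inter,
      inter_comm A e]
    refine ⟨fun ⟨he, _, h1⟩ => ⟨he, h1 ▸ odd_one⟩, fun ⟨he, hodd⟩ => ⟨he, hγ.1 e he, ?_⟩⟩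
    have hle : #(e ∩ A) ≤ 2 := (hγ.1 e he).2 ▸ card_le_card inter_subset_left
    rw [Nat.odd_iff] at hodd
    omega
  rw [hinter]
  exact even_card_filter_odd_card_of_forall_even _ fun v _ => hγ.2 v

end Chains

def IsBdryTrace (K : SComplex V) (η X : Finset (Finset V)) : Prop :=
  ∃ T : Finset (Finset V), (∀ t ∈ T, IsTri K t) ∧ bdry T ∩ η = X

section Cocycle

variable {K : SComplex V} {η : Finset (Finset V)}

lemma isBdryTrace_empty : IsBdryTrace K η ∅ :=
  ⟨∅, by simp, by simp⟩

lemma IsBdryTrace.symmDiff {X Y : Finset (Finset V)} (hX : IsBdryTrace K η X)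
    (hY : IsBdryTrace K η Y) : IsBdryTrace K η (X ∆ Y) := by
  obtain ⟨T, hT, rfl⟩ := hX
  obtain ⟨T', hT', rfl⟩ := hY
  exact ⟨T ∆ T', forall_isTri_symmDiff hT hT', by
    rw [bdry_symmDiff, inter_symmDiff_distrib_right]⟩

omit [Fintype V] in
lemma IsCocycle.filter_subset_tri_eq_pair (hη : IsCocycle K η) {t e e' : Finset V}
    (ht : IsTri K t) (he : e ∈ η) (he' : e' ∈ η) (hne : e ≠ e') (het : e ⊆ t)
    (he't : e' ⊆ t) : {x ∈ η | x ⊆ t} = {e, e'} := by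
  have hpair : {e, e'} ⊆ {x ∈ η | x ⊆ t} := by
    simp [insert_subset_iff, he, he', het, he't]
  have hle : #{x ∈ η | x ⊆ t} ≤ 3 := by
    have hsub : {x ∈ η | x ⊆ t} ⊆ t.powersetCard 2 := fun x hx => by
      rw [mem_filter] at hx
      exact mem_powersetCard.2 ⟨hx.2, (hη.1 x hx.1).2⟩
    simpa [ht.2] using card_le_card hsub
  have hge := card_le_card hpair
  rw [card_pair hne] at hge
  obtain ⟨k, hk⟩ := hη.2 t ht
  exact (eq_of_subset_of_card_le hpair (by rw [card_pair hne]; omega)).symm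

lemma IsCocycle.isBdryTrace_of_subset_tri (hη : IsCocycle K η) {t e e' : Finset V}
    (ht : IsTri K t) (he : e ∈ η) (he' : e' ∈ η) (het : e ⊆ t) (he't : e' ⊆ t) :
    IsBdryTrace K η ({e} ∆ {e'}) := by
  by_cases hee' : e = e'
  · rw [hee', symmDiff_self]
    exact isBdryTrace_empty
  refine ⟨{t}, by simpa using ht, ?_⟩
  rw [singleton_symmDiff_singleton hee',
    ← hη.filter_subset_tri_eq_pair ht he he' hee' het he't]
  ext x
  simp only [mem_inter, mem_filter, mem_bdry_singleton]
  constructor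
  · exact fun ⟨⟨hxt, _⟩, hx⟩ => ⟨hx, hxt⟩
  · exact fun ⟨hx, hxt⟩ => ⟨⟨hxt, by rw [(hη.1 x hx).2, ht.2]⟩, hx⟩

lemma IsCocycle.isBdryTrace_of_dualPath (hη : IsCocycle K η) {t t' e e' : Finset V}
    (hpath : Relation.ReflTransGen (DualStep K η) t t') (ht : IsTri K t) (he : e ∈ η)
    (het : e ⊆ t) (he' : e' ∈ η) (he't' : e' ⊆ t') : IsBdryTrace K η ({e} ∆ {e'}) := by
  induction hpath generalizing e' with
  | refl => exact hη.isBdryTrace_of_subset_tri ht he he' het he't'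
  | tail _ hstep ih =>
    obtain ⟨-, -, hc, f, hf, hfb, hfc⟩ := hstep
    have := (ih hf hfb).symmDiff (hη.isBdryTrace_of_subset_tri hc hf he' hfc he't')
    rwa [symmDiff_assoc, symmDiff_symmDiff_cancel_left] at this

lemma IsCocycle.isBdryTrace_pair (hK : IsClosedSurface K) (hη : IsCocycle K η)
    (hηc : DualConnected K η) {e e' : Finset V} (he : e ∈ η) (he' : e' ∈ η) :
    IsBdryTrace K η ({e} ∆ {e'}) := by
  obtain ⟨t, ht, het⟩ := hK.pure2 e (hη.1 e he).1
  obtain ⟨t', ht', he't'⟩ := hK.pure2 e' (hη.1 e' he').1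
  exact hη.isBdryTrace_of_dualPath (hηc t t' ⟨ht, e, he, het⟩ ⟨ht', e', he', he't'⟩)
    ht he het he' he't'

lemma IsCocycle.isBdryTrace_of_even (hK : IsClosedSurface K) (hη : IsCocycle K η)
    (hηc : DualConnected K η) {S : Finset (Finset V)} (hSη : S ⊆ η) (hS : Even #S) :
    IsBdryTrace K η S := by
  induction S using strongInduction with
  | H S ih =>
    obtain rfl | ⟨e, heS⟩ := S.eq_empty_or_nonempty
    · exact isBdryTrace_empty
    obtain ⟨e', he'S, hne⟩ : ∃ e' ∈ S, e ≠ e' := by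
      by_contra! h
      have : S = {e} := eq_singleton_iff_unique_mem.2 ⟨heS, fun x hx => (h x hx).symm⟩
      simp [this] at hS
    have hpair : {e, e'} ⊆ S := insert_subset heS (singleton_subset_iff.2 he'S)
    have hle : 2 ≤ #S := by simpa [card_pair hne] using card_le_card hpair
    have hrest : IsBdryTrace K η (S \ {e, e'}) := by
      refine ih _ (sdiff_ssubset hpair (by simp)) (sdiff_subset.trans hSη) ?_
      rw [card_sdiff_of_subset hpair, card_pair hne, Nat.even_sub hle]
      exact iff_of_true hS even_two
    have := (hη.isBdryTrace_pair hK hηc (hSη heS) (hSη he'S)).symmDiff hrest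
    rwa [singleton_symmDiff_singleton hne, symmDiff_sdiff_eq_sup, sup_eq_union,
      union_eq_right.2 hpair] at this

end Cocycle

lemma IsCocycle.exists_homol1_inter_eq_empty {K : SComplex V} {η : Finset (Finset V)}
    (hK : IsClosedSurface K) (hη : IsCocycle K η) (hηc : DualConnected K η)
    {γ ζ : Finset (Finset V)} (hγ : IsOneCycle K γ) (hγζ : Homol1 K γ ζ)
    (heven : Even #(γ ∩ η)) : ∃ γ', IsOneCycle K γ' ∧ Homol1 K γ' ζ ∧ γ' ∩ η = ∅ := by
  obtain ⟨T, hT, hTη⟩ := hη.isBdryTrace_of_even hK hηc inter_subset_right heven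
  refine ⟨γ ∆ bdry T, hγ.symmDiff (isOneCycle_bdry hT), ?_, ?_⟩
  · rw [Homol1, symmDiff_right_comm]
    exact hγζ.symmDiff ⟨T, hT, rfl⟩
  · rw [inter_symmDiff_distrib_right, hTη, symmDiff_self, bot_eq_empty]

lemma Cohomologous.symm {K : SComplex V} {η η' : Finset (Finset V)}
    (h : Cohomologous K η η') : Cohomologous K η' η := by
  obtain ⟨A, hA⟩ := h
  exact ⟨A, symmDiff_comm η' η ▸ hA⟩

lemma Feasible.of_cohomologous {K : SComplex V} {ζ η η' : Finset (Finset V)}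
    (hK : IsClosedSurface K) (hη : IsCocycle K η) (hηc : DualConnected K η)
    (hcoh : Cohomologous K η η') (hfeas : Feasible K ζ η) : Feasible K ζ η' := by
  intro γ hγ hγζ
  by_contra hγη'
  rw [not_nonempty_iff_eq_empty] at hγη'
  obtain ⟨A, hA⟩ := hcoh
  have hγη : γ ∩ η = γ ∩ cobdryV K A := by
    rw [← hA, inter_symmDiff_distrib_left, hγη', ← bot_eq_empty, symmDiff_bot]
  obtain ⟨γ', hγ', hγ'ζ, hγ'η⟩ :=
    hη.exists_homol1_inter_eq_empty hK hηc hγ hγζ (hγη ▸ hγ.even_card_inter_cobdryV A)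
  simpa [hγ'η] using hfeas γ' hγ' hγ'ζ

theorem statement8_general (K : SComplex V) (hK : IsClosedSurface K)
    (ζ : Finset (Finset V))
    (η η' : Finset (Finset V))
    (hη : IsCocycle K η) (hηc : DualConnected K η)
    (hη' : IsCocycle K η') (hη'c : DualConnected K η')
    (hcoh : Cohomologous K η η') :
    Feasible K ζ η ↔ Feasible K ζ η' :=
  ⟨Feasible.of_cohomologous hK hη hηc hcoh, Feasible.of_cohomologous hK hη' hη'c hcoh.symm⟩

/-- Let `ζ` be a non-bounding 1-cycle of `K` and let `η`, `η'` be
connected 1-cocycles of `K` that are cohomologous.  Then `η` is a feasible set for `ζ`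
iff `η'` is. -/
theorem statement8 (K : SComplex V) (hK : IsClosedSurface K)
    (ζ : Finset (Finset V)) (hζ : IsOneCycle K ζ) (hnb : ¬ IsBounding1 K ζ)
    (η η' : Finset (Finset V))
    (hη : IsCocycle K η) (hηc : DualConnected K η)
    (hη' : IsCocycle K η') (hη'c : DualConnected K η')
    (hcoh : Cohomologous K η η') :
    Feasible K ζ η ↔ Feasible K ζ η' :=
  statement8_general K hK ζ η η' hη hηc hη' hη'c hcoh

end

end ArxivCut
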